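/- arXiv:2111.05694 — 3 statements merged into one kernel-verified Lean document; each statement's English description precedes it below -/
import Mathlib

section
/- Consider the MinHash collision probability: if h is a uniformly random injective function from a finite universe U to a totally ordered set (equivalently, a uniformly random permutation of U), then for finite nonempty sets A, B ⊆ U, the probability that argmin over A of h equals argmin over B of h is |A ∩ B| / |A ∪ B| (the Jaccard similarity of A and B). -/
open Finset

/-! For an injection `σ` into a linear order, the minima of `σ` over `A` and over `B` coincide
exactly when the minimizer of `σ` on `A ∪ B` lies in `A ∩ B`. Precomposing `σ` with the
transposition of two points of `A ∪ B` exchanges the events that either one is that minimizer,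
so the minimizer is uniformly distributed on `A ∪ B`, and it lands in `A ∩ B` with probability
`|A ∩ B| / |A ∪ B|`. -/

namespace Finset

theorem image_swap_of_mem {β : Type*} [DecidableEq β] {s : Finset β} {x y : β} (hx : x ∈ s)
    (hy : y ∈ s) : s.image (Equiv.swap x y) = s := by
  have hsupport : {a | Equiv.swap x y a ≠ a} ⊆ s := by
    intro a ha
    rcases (Equiv.swap_apply_ne_self_iff.mp ha).2 with rfl | rfl <;> assumption
  exact (map_eq_image _ _).symm.trans (map_perm hsupport)

theorem min'_eq_min'_iff_min'_union_mem_inter {α : Type*} [LinearOrder α] {s t : Finset α}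
    (hs : s.Nonempty) (ht : t.Nonempty) :
    s.min' hs = t.min' ht ↔ (s ∪ t).min' (hs.mono subset_union_left) ∈ s ∩ t := by
  rw [min'_union hs ht, mem_inter]
  constructor
  · intro h
    rw [h, inf_idem]
    exact ⟨h ▸ min'_mem s hs, min'_mem t ht⟩
  · rintro ⟨hms, hmt⟩
    exact le_antisymm (le_inf_iff.mp (min'_le s _ hms)).2 (le_inf_iff.mp (min'_le t _ hmt)).1

end Finset

namespace Equiv

variable {U α : Type*} [LinearOrder α]

def argminOn (e : U ≃ α) (S : Finset U) (hS : S.Nonempty) : U :=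
  e.symm ((S.image e).min' (hS.image e))

theorem argminOn_mem_iff (e : U ≃ α) {S : Finset U} (hS : S.Nonempty) (T : Finset U) :
    e.argminOn S hS ∈ T ↔ (S.image e).min' (hS.image e) ∈ T.image e := by
  rw [mem_image]
  exact ⟨fun h => ⟨_, h, e.apply_symm_apply _⟩, by rintro ⟨a, ha, h⟩; simpa [argminOn, ← h]⟩

theorem argminOn_mem (e : U ≃ α) {S : Finset U} (hS : S.Nonempty) : e.argminOn S hS ∈ S :=
  (e.argminOn_mem_iff hS S).mpr (min'_mem _ _)

theorem argminOn_swap_trans [DecidableEq U] (e : U ≃ α) {S : Finset U} (hS : S.Nonempty)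
    {x y : U} (hx : x ∈ S) (hy : y ∈ S) :
    ((swap x y).trans e).argminOn S hS = swap x y (e.argminOn S hS) := by
  have himage : S.image ((swap x y).trans e) = S.image e := by
    rw [coe_trans, ← image_image, image_swap_of_mem hx hy]
  simp only [argminOn, himage, symm_trans_apply, symm_swap]

section Counting

variable [Fintype U] [DecidableEq U] [Fintype α] {S : Finset U} (hS : S.Nonempty)

theorem card_filter_argminOn_eq_eq {x y : U} (hx : x ∈ S) (hy : y ∈ S) :
    #{e : U ≃ α | e.argminOn S hS = x} = #{e : U ≃ α | e.argminOn S hS = y} := by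
  refine card_nbij' ((swap x y).trans ·) ((swap x y).trans ·) ?_ ?_ ?_ ?_
  · intro e he
    simp only [coe_filter, mem_univ, true_and, Set.mem_ofPred_eq] at he ⊢
    rw [argminOn_swap_trans e hS hx hy, he, swap_apply_left]
  · intro e he
    simp only [coe_filter, mem_univ, true_and, Set.mem_ofPred_eq] at he ⊢
    rw [argminOn_swap_trans e hS hx hy, he, swap_apply_right]
  all_goals intro e _; ext; simp

theorem card_filter_argminOn_mem {T : Finset U} (hT : T ⊆ S) {x : U} (hx : x ∈ S) :
    #{e : U ≃ α | e.argminOn S hS ∈ T} = #T * #{e : U ≃ α | e.argminOn S hS = x} := by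
  rw [← sum_card_fiberwise_eq_card_filter, sum_const_nat]
  exact fun y hy => card_filter_argminOn_eq_eq hS (hT hy) hx

end Counting

end Equiv

/-- MinHash collision probability. If `σ` is a uniformly random bijection
from a finite universe `U` to `Fin |U|`, then for nonempty finite sets `A, B ⊆ U`, the
probability that the minimizer of `σ` over `A` equals the minimizer of `σ` over `B` is
the Jaccard similarity `|A ∩ B| / |A ∪ B|`. (The argmins coincide iff the minimal
`σ`-values over `A` and over `B` coincide, since `σ` is injective.) -/
theorem minhash_jaccard {U : Type*} [Fintype U] [DecidableEq U]
    (A B : Finset U) (hA : A.Nonempty) (hB : B.Nonempty) :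
    ((univ.filter fun σ : U ≃ Fin (Fintype.card U) =>
        (A.image fun x => σ x).min' (hA.image _) =
        (B.image fun x => σ x).min' (hB.image _)).card : ℝ)
      / (Fintype.card (U ≃ Fin (Fintype.card U)) : ℝ)
      = ((A ∩ B).card : ℝ) / ((A ∪ B).card : ℝ) := by
  have hAB : (A ∪ B).Nonempty := hA.mono subset_union_left
  obtain ⟨x, hx⟩ := id hAB
  have hevent : (univ.filter fun σ : U ≃ Fin (Fintype.card U) =>
      (A.image fun x => σ x).min' (hA.image _) = (B.image fun x => σ x).min' (hB.image _)) =
      ({σ | σ.argminOn (A ∪ B) hAB ∈ A ∩ B} : Finset (U ≃ Fin (Fintype.card U))) := by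
    refine filter_congr fun σ _ => ?_
    rw [min'_eq_min'_iff_min'_union_mem_inter, Equiv.argminOn_mem_iff]
    simp only [image_union, image_inter _ _ σ.injective]
  have htotal : Fintype.card (U ≃ Fin (Fintype.card U)) =
      #(A ∪ B) * #{σ : U ≃ Fin (Fintype.card U) | σ.argminOn (A ∪ B) hAB = x} := by
    rw [← Equiv.card_filter_argminOn_mem hAB subset_rfl hx,
      filter_true_of_mem fun σ _ => σ.argminOn_mem hAB, card_univ]
  have hfiber : #{σ : U ≃ Fin (Fintype.card U) | σ.argminOn (A ∪ B) hAB = x} ≠ 0 := by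
    intro h
    rw [h, mul_zero] at htotal
    exact (Fintype.card_pos_iff.mpr ⟨Fintype.equivFin U⟩).ne' htotal
  rw [hevent, Equiv.card_filter_argminOn_mem hAB inter_subset_union hx, htotal]
  push_cast
  exact mul_div_mul_right _ _ (by exact_mod_cast hfiber)
end

section
/- The random projection hash h_{w,b}(x) = ⌊(⟨x,w⟩ + b)/l⌋ satisfies: for fixed x, y ∈ ℝ^d and fixed w, if b is uniform on [0, l], then the probability that h_{w,b}(x) = h_{w,b}(y) equals max(0, 1 − |⟨x−y, w⟩|/l). -/
/-!
Shifting `b` by `l` raises both hash values by one, so the set of colliding offsets is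
`l`-periodic and its measure over `[0, l]` equals its measure over any window of length `l`.
On the window `[-c, l - c)` the hash of `c` vanishes, so there a collision means that the hash of
`a` vanishes too; the colliding offsets form the overlap of two windows of length `l` whose left
ends are `|a - c|` apart.
-/

open MeasureTheory Set

/-- `a` and `c` stand for the projections `⟨x, w⟩` and `⟨y, w⟩`. -/
def hashCollisionSet (l a c : ℝ) : Set ℝ := {b | ⌊(a + b) / l⌋ = ⌊(c + b) / l⌋}

lemma measurableSet_hashCollisionSet (l a c : ℝ) : MeasurableSet (hashCollisionSet l a c) :=
  measurableSet_eq_fun (by fun_prop) (by fun_prop)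

lemma periodic_mem_hashCollisionSet {l : ℝ} (hl : l ≠ 0) (a c : ℝ) :
    Function.Periodic (· ∈ hashCollisionSet l a c) l := by
  intro b
  have shift (u : ℝ) : ⌊(u + (b + l)) / l⌋ = ⌊(u + b) / l⌋ + 1 := by
    rw [← Int.floor_add_one, ← add_assoc, add_div _ l, div_self hl]
  simp only [hashCollisionSet, mem_ofPred_eq, shift, add_left_inj]

lemma volume_inter_Icc_eq_inter_Ico_of_periodic {l : ℝ} (hl : 0 < l) {S : Set ℝ}
    (hS : MeasurableSet S) (hper : Function.Periodic (· ∈ S) l) (t : ℝ) :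
    volume (S ∩ Icc 0 l) = volume (S ∩ Ico t (t + l)) := by
  have hinv : ∀ g : AddSubgroup.zmultiples l, (fun x => g +ᵥ x) ⁻¹' S = S := by
    rintro ⟨_, n, rfl⟩
    ext x
    simpa [add_comm] using (hper.zsmul n x).to_iff
  calc volume (S ∩ Icc 0 l) = volume (S ∩ Ioc 0 (0 + l)) := by
        rw [zero_add]; exact measure_congr ((ae_eq_refl S).inter Ioc_ae_eq_Icc.symm)
    _ = volume (S ∩ Ioc t (t + l)) :=
        (isAddFundamentalDomain_Ioc hl 0).measure_set_eq (isAddFundamentalDomain_Ioc hl t) hS hinv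
    _ = volume (S ∩ Ico t (t + l)) := measure_congr ((ae_eq_refl S).inter Ico_ae_eq_Ioc.symm)

lemma floor_add_div_eq_zero_iff {l : ℝ} (hl : 0 < l) (a b : ℝ) :
    ⌊(a + b) / l⌋ = 0 ↔ b ∈ Ico (-a) (-a + l) := by
  rw [Int.floor_eq_zero_iff, mem_Ico, mem_Ico, le_div_iff₀ hl, div_lt_iff₀ hl]
  constructor <;> rintro ⟨h₀, h₁⟩ <;> constructor <;> linarith

lemma hashCollisionSet_inter_Ico {l : ℝ} (hl : 0 < l) (a c : ℝ) :
    hashCollisionSet l a c ∩ Ico (-c) (-c + l) = Ico (-a) (-a + l) ∩ Ico (-c) (-c + l) := by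
  ext b
  simp only [mem_inter_iff, hashCollisionSet, mem_ofPred_eq]
  constructor
  · rintro ⟨hab, hcb⟩
    have hc := (floor_add_div_eq_zero_iff hl c b).2 hcb
    exact ⟨(floor_add_div_eq_zero_iff hl a b).1 (hab.trans hc), hcb⟩
  · rintro ⟨hab, hcb⟩
    have hc := (floor_add_div_eq_zero_iff hl c b).2 hcb
    exact ⟨((floor_add_div_eq_zero_iff hl a b).2 hab).trans hc.symm, hcb⟩

lemma volume_Ico_neg_add_inter_Ico_neg_add (l a c : ℝ) :
    volume (Ico (-a) (-a + l) ∩ Ico (-c) (-c + l)) = ENNReal.ofReal (l - |a - c|) := by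
  rw [Ico_inter_Ico, Real.volume_Ico, max_neg_neg, min_add_add_right, min_neg_neg,
    abs_sub_comm, ← max_sub_min_eq_abs]
  ring_nf

lemma volume_Icc_inter_hashCollisionSet {l : ℝ} (hl : 0 < l) (a c : ℝ) :
    volume (Icc 0 l ∩ hashCollisionSet l a c) = ENNReal.ofReal (l - |a - c|) := by
  rw [inter_comm, volume_inter_Icc_eq_inter_Ico_of_periodic hl
      (measurableSet_hashCollisionSet l a c) (periodic_mem_hashCollisionSet hl.ne' a c) (-c),
    hashCollisionSet_inter_Ico hl, volume_Ico_neg_add_inter_Ico_neg_add]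

lemma toReal_volume_Icc_inter_hashCollisionSet_div {l : ℝ} (hl : 0 < l) (a c : ℝ) :
    (volume (Icc 0 l ∩ hashCollisionSet l a c)).toReal / l = max 0 (1 - |a - c| / l) := by
  rw [volume_Icc_inter_hashCollisionSet hl, ENNReal.toReal_ofReal', ← max_div_div_right hl.le,
    zero_div, sub_div, div_self hl.ne', max_comm]

/-- For the random projection hash `h_{w,b}(x) = ⌊(⟨x,w⟩ + b)/l⌋` with `b`
uniform on `[0, l]` (`l > 0`) and fixed `w`, the collision probability of fixed `x, y` is
`max(0, 1 − |⟨x−y, w⟩|/l)`. -/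
theorem random_projection_collision_prob {d : ℕ} (l : ℝ) (hl : 0 < l)
    (w x y : Fin d → ℝ) :
    (volume {b ∈ Set.Icc (0 : ℝ) l |
        ⌊((∑ i, x i * w i) + b) / l⌋ = ⌊((∑ i, y i * w i) + b) / l⌋}).toReal / l
      = max 0 (1 - |∑ i, (x i - y i) * w i| / l) := by
  have hdiff : ∑ i, (x i - y i) * w i = ∑ i, x i * w i - ∑ i, y i * w i := by
    simp only [sub_mul, Finset.sum_sub_distrib]
  rw [hdiff]
  exact toReal_volume_Icc_inter_hashCollisionSet_div hl _ _
end

section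
/- If w has i.i.d. coordinates with a continuous distribution having CDF F, then for x, y ∈ ℝ^d the probability that the binary signatures agree is ∏_{i=1}^d (1 − |F(x_i) − F(y_i)|). -/
/-!
Pushing each threshold `wᵢ` forward to a probability measure `νᵢ` on `ℝ`, its CDF is `F`, and the
coordinates disagree exactly when `wᵢ` falls in `[min xᵢ yᵢ, max xᵢ yᵢ)`, an interval of
`νᵢ`-mass `|F xᵢ - F yᵢ|` because the continuity of `F` rules out atoms at the endpoints.
Independence turns the joint law of `w` into the product of the `νᵢ`, so the probability of
agreement in every coordinate is the product of the coordinatewise probabilities.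
-/

open MeasureTheory ProbabilityTheory Set

namespace ProbabilityTheory

lemma cdf_map_apply {Ω : Type*} [MeasurableSpace Ω] {P : Measure Ω}
    [IsProbabilityMeasure P] {X : Ω → ℝ} (hX : Measurable X) (t : ℝ) :
    cdf (P.map X) t = P.real {ω | X ω ≤ t} := by
  have := Measure.isProbabilityMeasure_map (μ := P) hX.aemeasurable
  rw [cdf_eq_real, map_measureReal_apply hX measurableSet_Iic]
  rfl

variable {μ : Measure ℝ} [IsProbabilityMeasure μ]

lemma measure_Ico_of_continuous_cdf (hF : Continuous (cdf μ)) (a b : ℝ) :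
    μ (Ico a b) = ENNReal.ofReal (cdf μ b - cdf μ a) := by
  have h := (cdf μ).measure_Ico a b
  rwa [measure_cdf, hF.continuousWithinAt.leftLim_eq, hF.continuousWithinAt.leftLim_eq] at h

lemma measureReal_lt_iff_lt_of_continuous_cdf (hF : Continuous (cdf μ)) (x y : ℝ) :
    μ.real {t | t < x ↔ t < y} = 1 - |cdf μ x - cdf μ y| := by
  wlog hxy : x ≤ y generalizing x y
  · simpa only [Iff.comm, abs_sub_comm] using this y x (le_of_not_ge hxy)
  have hmono : cdf μ x ≤ cdf μ y := monotone_cdf μ hxy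
  have hset : {t : ℝ | t < x ↔ t < y} = (Ico x y)ᶜ := by
    ext t
    simp only [mem_ofPred_eq, mem_compl_iff, mem_Ico]
    grind
  rw [hset, probReal_compl_eq_one_sub measurableSet_Ico, measureReal_def,
    measure_Ico_of_continuous_cdf hF, ENNReal.toReal_ofReal (sub_nonneg.2 hmono),
    abs_of_nonpos (sub_nonpos.2 hmono)]
  ring

end ProbabilityTheory

/-- If the threshold vector `w` has i.i.d. coordinates with a continuous
CDF `F`, then for `x, y ∈ ℝ^d` the probability that the binary signatures of `x` and `y`
agree (i.e. `wᵢ < xᵢ ⟺ wᵢ < yᵢ` in every coordinate) is `∏ᵢ (1 − |F(xᵢ) − F(yᵢ)|)`. -/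
theorem binary_signature_agreement_prob {Ω : Type*} [MeasureSpace Ω]
    [IsProbabilityMeasure (ℙ : Measure Ω)] (d : ℕ) (w : Fin d → Ω → ℝ)
    (hmeas : ∀ i, Measurable (w i)) (F : ℝ → ℝ) (hF : Continuous F)
    (hident : ∀ i t, ((ℙ : Measure Ω) {ω | w i ω ≤ t}).toReal = F t)
    (hindep : iIndepFun w ℙ)
    (x y : Fin d → ℝ) :
    ((ℙ : Measure Ω) {ω | ∀ i, (w i ω < x i ↔ w i ω < y i)}).toReal
      = ∏ i, (1 - |F (x i) - F (y i)|) := by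
  have hcdf : ∀ i, cdf ((ℙ : Measure Ω).map (w i)) = F := fun i =>
    funext fun t => (cdf_map_apply (hmeas i) t).trans (hident i t)
  have hprob : ∀ i, IsProbabilityMeasure ((ℙ : Measure Ω).map (w i)) := fun i =>
    Measure.isProbabilityMeasure_map (hmeas i).aemeasurable
  have hevent : {ω | ∀ i, (w i ω < x i ↔ w i ω < y i)}
      = (fun ω i => w i ω) ⁻¹' univ.pi fun i => {t | t < x i ↔ t < y i} := by
    ext ω; simp
  have hmeas_pi : Measurable fun ω i => w i ω := measurable_pi_lambda _ hmeas
  rw [hevent, ← Measure.map_apply hmeas_pi (MeasurableSet.univ_pi fun i => ?_),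
    hindep.map_fun_eq_pi_map fun i => (hmeas i).aemeasurable, Measure.pi_pi, ENNReal.toReal_prod]
  · refine Finset.prod_congr rfl fun i _ => ?_
    rw [← measureReal_def, measureReal_lt_iff_lt_of_continuous_cdf (by rwa [hcdf]), hcdf]
  · exact measurableSet_setOfPred.2
      ((measurableSet_setOfPred.1 measurableSet_Iio).iff (measurableSet_setOfPred.1 measurableSet_Iio))
end
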